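/- For pairwise distinct positive reals λ₁, …, λ_n (n ≥ 1), the partial-fraction identity ∑_{k=1}^n ∏_{j≠k} λ_k/(λ_k − λ_j) = 1 holds. Consequently, the closed-form outage probability expression evaluates to 1 at z = 0. -/
import Mathlib

open Finset

/-- Partial-fraction identity: for pairwise distinct positive reals `λ₁,…,λₙ` (n ≥ 1),
`∑ₖ ∏_{j≠k} λₖ/(λₖ−λⱼ) = 1`. -/
theorem stmt_7 (n : ℕ) (hn : 1 ≤ n) (lam : Fin n → ℝ)
    (hpos : ∀ k, 0 < lam k) (hdist : Function.Injective lam) :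
    ∑ k, ∏ j ∈ univ.erase k, lam k / (lam k - lam j) = 1 := by
  set v : Fin n → ℝ := fun k => (lam k)⁻¹ with hv
  have hvinj : Function.Injective v := fun a b h => hdist (by
    have := congrArg (·⁻¹) h
    simpa [hv, inv_inv] using this)
  have hne : (univ : Finset (Fin n)).Nonempty := by
    exact univ_nonempty_iff.mpr ⟨⟨0, hn⟩⟩
  have hsum := Lagrange.sum_basis (v := v) hvinj.injOn hne
  have := congrArg (Polynomial.eval 0) hsum
  rw [Polynomial.eval_finset_sum, Polynomial.eval_one] at this
  rw [← this]
  apply Finset.sum_congr rfl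
  intro k _
  rw [Lagrange.basis, Polynomial.eval_prod]
  apply Finset.prod_congr rfl
  intro j hj
  have hjk : lam j ≠ lam k := fun h => (mem_erase.mp hj).1 (hdist h)
  have h1 : lam j ≠ 0 := (hpos j).ne'
  have h2 : lam k ≠ 0 := (hpos k).ne'
  have h3 : lam k - lam j ≠ 0 := sub_ne_zero.mpr hjk.symm
  have h5 : (lam k)⁻¹ - (lam j)⁻¹ ≠ 0 := sub_ne_zero.mpr (fun h => hjk ((inv_injective h).symm))
  simp only [Lagrange.basisDivisor, Polynomial.eval_mul, Polynomial.eval_C,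
    Polynomial.eval_sub, Polynomial.eval_X, hv]
  have h6 : -(lam k * lam j) + lam j ^ 2 ≠ 0 := by
    have : lam j * (lam j - lam k) ≠ 0 := mul_ne_zero h1 (sub_ne_zero.mpr hjk)
    intro h; apply this; linarith [h]
  rw [zero_sub, div_eq_iff h3]
  have h4 : lam j - lam k ≠ 0 := sub_ne_zero.mpr hjk
  rw [inv_sub_inv h2 h1, inv_div]
  field_simp
  ring
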